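/- Let (V, ℓ) be a weighted directed graph, let J ⊆ V × V be a set of edges, let X, Y ⊆ V, and let u, v ∈ V. Suppose that every walk from u to v of finite length contains an occurrence of some vertex x ∈ X followed (not necessarily immediately) by an occurrence of some vertex y ∈ Y such that every step of the walk between these two occurrences lies in J. Then d(u, v) = inf_{x ∈ X, y ∈ Y} ( d(u, x) + d_J(x, y) + d(y, v) ). (This is the correctness of computing the distance between vertices in two different pieces B and B' via the boundary vertex sets X and Y and the intermediate subgraph J.) -/

import Mathlib

open scoped ENNReal

/-- The length of a walk `w₀, w₁, …, w_k`, given as a list of vertices, with respect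
to the length function `ℓ : V → V → ℝ≥0∞`: the sum `Σ ℓ (w_{i-1}) (w_i)`. -/
noncomputable def walkLen {V : Type*} (ℓ : V → V → ℝ≥0∞) : List V → ℝ≥0∞
  | [] => 0
  | [_] => 0
  | a :: b :: rest => ℓ a b + walkLen ℓ (b :: rest)

/-- `IsWalkIn F u v w` means the (nonempty) list of vertices `w` is a walk from `u`
to `v` all of whose consecutive pairs lie in `F`. -/
def IsWalkIn {V : Type*} (F : Set (V × V)) (u v : V) (w : List V) : Prop :=
  w.head? = some u ∧ w.getLast? = some v ∧ w.Chain' (fun a b => (a, b) ∈ F)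

/-- `gdist ℓ F u v` is the infimum in `[0,∞]` of the lengths of all walks from `u`
to `v` whose consecutive pairs lie in `F`. Taking `F = Set.univ` gives the distance
`d(u,v)` in the weighted directed graph `(V, ℓ)`. -/
noncomputable def gdist {V : Type*} (ℓ : V → V → ℝ≥0∞) (F : Set (V × V)) (u v : V) : ℝ≥0∞ :=
  ⨅ w ∈ {w : List V | IsWalkIn F u v w}, walkLen ℓ w

/-!
Concatenating a walk `u → x`, a `J`-walk `x → y` and a walk `y → v` gives a walk `u → v`
whose length is the sum of the three, so `d(u,v)` is at most the right-hand side. Conversely,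
every walk `u → v` of finite length splits, by hypothesis, at an occurrence of some `x ∈ X`
and a later occurrence of some `y ∈ Y` into three such walks, so its length is at least the
right-hand side; walks of infinite length bound nothing.
-/

section walks

variable {V : Type*}

section walkLen

variable (ℓ : V → V → ℝ≥0∞)

theorem walkLen_append_cons (m : V) :
    ∀ a c : List V, walkLen ℓ (a ++ m :: c) = walkLen ℓ (a ++ [m]) + walkLen ℓ (m :: c)
  | [], _ => by simp [walkLen]
  | [_], _ => by simp [walkLen]
  | b :: b' :: a, c => by
    change ℓ b b' + walkLen ℓ (b' :: a ++ m :: c) = ℓ b b' + walkLen ℓ (b' :: a ++ [m]) + _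
    rw [walkLen_append_cons m (b' :: a) c, add_assoc]

theorem walkLen_append_of_head?_eq {a b : List V} {m : V} (h : b.head? = some m) :
    walkLen ℓ (a ++ b) = walkLen ℓ (a ++ [m]) + walkLen ℓ b := by
  obtain ⟨c, rfl⟩ := List.head?_eq_some_iff.1 h
  exact walkLen_append_cons ℓ m a c

theorem walkLen_append_of_getLast?_eq {a b : List V} {m : V} (h : a.getLast? = some m) :
    walkLen ℓ (a ++ b) = walkLen ℓ a + walkLen ℓ (m :: b) := by
  obtain ⟨s, rfl⟩ := List.getLast?_eq_some_iff.1 h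
  rw [List.append_assoc, List.singleton_append, walkLen_append_cons]

end walkLen

section IsWalkIn

variable {F G : Set (V × V)} {u v x : V} {w a b : List V}

theorem isWalkIn_univ_iff :
    IsWalkIn Set.univ u v w ↔ w.head? = some u ∧ w.getLast? = some v :=
  ⟨fun h => ⟨h.1, h.2.1⟩, fun h =>
    ⟨h.1, h.2, List.Pairwise.isChain (List.pairwise_of_forall fun _ _ => trivial)⟩⟩

theorem IsWalkIn.mono (hFG : F ⊆ G) (h : IsWalkIn F u v w) : IsWalkIn G u v w :=
  ⟨h.1, h.2.1, h.2.2.imp fun _ _ hab => hFG hab⟩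

theorem IsWalkIn.append_tail (ha : IsWalkIn F u x a) (hb : IsWalkIn F x v b) :
    IsWalkIn F u v (a ++ b.tail) := by
  obtain ⟨s, rfl⟩ := List.getLast?_eq_some_iff.1 ha.2.1
  obtain ⟨c, rfl⟩ := List.head?_eq_some_iff.1 hb.1
  refine ⟨by simpa [List.head?_append] using ha.1, ?_, ?_⟩
  · simpa [List.getLast?_append, List.getLast?_cons] using hb.2.1
  · exact ha.2.2.append_overlap hb.2.2 (List.cons_ne_nil x [])

end IsWalkIn

section gdist

variable (ℓ : V → V → ℝ≥0∞) {F G : Set (V × V)} {u v x : V}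

theorem gdist_le_walkLen {w : List V} (hw : IsWalkIn F u v w) : gdist ℓ F u v ≤ walkLen ℓ w :=
  iInf₂_le w hw

theorem gdist_anti (hFG : F ⊆ G) : gdist ℓ G u v ≤ gdist ℓ F u v :=
  le_iInf₂ fun _ hw => gdist_le_walkLen ℓ (hw.mono hFG)

theorem gdist_triangle : gdist ℓ F u v ≤ gdist ℓ F u x + gdist ℓ F x v := by
  simp only [gdist, ENNReal.iInf_add, ENNReal.add_iInf, le_iInf_iff]
  intro b hb a ha
  obtain ⟨c, rfl⟩ := List.head?_eq_some_iff.1 hb.1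
  calc gdist ℓ F u v ≤ walkLen ℓ (a ++ c) := gdist_le_walkLen ℓ (ha.append_tail hb)
    _ = walkLen ℓ a + walkLen ℓ (x :: c) := walkLen_append_of_getLast?_eq ℓ ha.2.1

theorem gdist_add_le_walkLen_of_eq_append {J : Set (V × V)} {y : V} {w₁ w₂ w₃ : List V}
    (hw : IsWalkIn Set.univ u v (w₁ ++ w₂ ++ w₃)) (h₂ : IsWalkIn J x y w₂) :
    gdist ℓ Set.univ u x + gdist ℓ J x y + gdist ℓ Set.univ y v ≤
      walkLen ℓ (w₁ ++ w₂ ++ w₃) := by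
  rw [isWalkIn_univ_iff] at hw
  have h₁ : IsWalkIn Set.univ u x (w₁ ++ [x]) :=
    isWalkIn_univ_iff.2 ⟨by simpa [List.head?_append, h₂.1] using hw.1, by simp⟩
  have h₃ : IsWalkIn Set.univ y v (y :: w₃) :=
    isWalkIn_univ_iff.2
      ⟨rfl, by simpa [List.getLast?_append, List.getLast?_cons, h₂.2.1] using hw.2⟩
  have hsplit : walkLen ℓ (w₁ ++ w₂ ++ w₃) =
      walkLen ℓ (w₁ ++ [x]) + walkLen ℓ w₂ + walkLen ℓ (y :: w₃) := by
    have hlast : (w₁ ++ w₂).getLast? = some y := by simp [List.getLast?_append, h₂.2.1]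
    rw [walkLen_append_of_getLast?_eq ℓ hlast, walkLen_append_of_head?_eq ℓ h₂.1]
  rw [hsplit]
  gcongr
  exacts [gdist_le_walkLen ℓ h₁, gdist_le_walkLen ℓ h₂, gdist_le_walkLen ℓ h₃]

end gdist

end walks

theorem dist_eq_iInf_through_two_boundaries_general {V : Type*}
    (ℓ : V → V → ℝ≥0∞) (J : Set (V × V)) (X Y : Set V) (u v : V)
    (hcover : ∀ w : List V, IsWalkIn (Set.univ : Set (V × V)) u v w →
      walkLen ℓ w ≠ ⊤ →
      ∃ x ∈ X, ∃ y ∈ Y, ∃ w₁ w₂ w₃ : List V,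
        w = w₁ ++ w₂ ++ w₃ ∧ IsWalkIn J x y w₂) :
    gdist ℓ Set.univ u v =
      ⨅ x ∈ X, ⨅ y ∈ Y,
        (gdist ℓ Set.univ u x + gdist ℓ J x y + gdist ℓ Set.univ y v) := by
  refine le_antisymm (le_iInf₂ fun x _ => le_iInf₂ fun y _ => ?_) (le_iInf₂ fun w hw => ?_)
  · calc gdist ℓ Set.univ u v ≤ gdist ℓ Set.univ u x + gdist ℓ Set.univ x v :=
          gdist_triangle ℓ
      _ ≤ gdist ℓ Set.univ u x + (gdist ℓ Set.univ x y + gdist ℓ Set.univ y v) := by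
          gcongr; exact gdist_triangle ℓ
      _ ≤ gdist ℓ Set.univ u x + gdist ℓ J x y + gdist ℓ Set.univ y v := by
          rw [← add_assoc]; gcongr; exact gdist_anti ℓ (Set.subset_univ J)
  · by_cases htop : walkLen ℓ w = ⊤
    · simp [htop]
    obtain ⟨x, hx, y, hy, w₁, w₂, w₃, rfl, hw₂⟩ := hcover w hw htop
    exact iInf₂_le_of_le x hx <| iInf₂_le_of_le y hy <|
      gdist_add_le_walkLen_of_eq_append ℓ hw hw₂

/-- Correctness of computing distances between two different pieces via their
boundary sets `X`, `Y` and the intermediate subgraph `J`: if every finite-length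
walk from `u` to `v` contains a subwalk from some `x ∈ X` to some `y ∈ Y` all of
whose steps lie in `J`, then
`d(u,v) = inf_{x ∈ X, y ∈ Y} (d(u,x) + d_J(x,y) + d(y,v))`. -/
theorem dist_eq_iInf_through_two_boundaries {V : Type*} [Fintype V]
    (ℓ : V → V → ℝ≥0∞) (J : Set (V × V)) (X Y : Set V) (u v : V)
    (hcover : ∀ w : List V, IsWalkIn (Set.univ : Set (V × V)) u v w →
      walkLen ℓ w ≠ ⊤ →
      ∃ x ∈ X, ∃ y ∈ Y, ∃ w₁ w₂ w₃ : List V,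
        w = w₁ ++ w₂ ++ w₃ ∧ IsWalkIn J x y w₂) :
    gdist ℓ Set.univ u v =
      ⨅ x ∈ X, ⨅ y ∈ Y,
        (gdist ℓ Set.univ u x + gdist ℓ J x y + gdist ℓ Set.univ y v) :=
  dist_eq_iInf_through_two_boundaries_general ℓ J X Y u v hcover
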